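/- Let W be a finite Coxeter group, w ∈ W, s ∈ D_R(w). For every v ∈ W, deg_w(v) = deg_w(vs), where deg_w denotes degree in the Bruhat graph on the lower Bruhat interval [e, w] (with degree 0 for elements outside [e,w]). -/

import Mathlib

open CoxeterSystem

variable {B W : Type*} [Group W] {M : CoxeterMatrix B}

/-- A directed edge of the Bruhat graph: `v = t * u` for a reflection `t`, with length increase. -/
def bruhatEdge (cs : CoxeterSystem M W) (u v : W) : Prop :=
  ∃ t : W, cs.IsReflection t ∧ v = t * u ∧ cs.length u < cs.length v

/-- Bruhat order: reflexive-transitive closure of Bruhat edges. -/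
def bruhatLE (cs : CoxeterSystem M W) : W → W → Prop :=
  Relation.ReflTransGen (bruhatEdge cs)

/-- The standard parabolic subgroup generated by the simple reflections indexed by `I`. -/
def parabolic (cs : CoxeterSystem M W) (I : Set B) : Subgroup W :=
  Subgroup.closure (cs.simple '' I)

/-- The parabolic double coset `W_I x W_J`. -/
def doubleCoset (cs : CoxeterSystem M W) (I J : Set B) (x : W) : Set W :=
  {w | ∃ u ∈ parabolic cs I, ∃ v ∈ parabolic cs J, w = u * x * v}

open scoped Classical in
/-- Degree of `v` in the Bruhat graph on the lower interval `[e, w]` (0 outside). -/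
noncomputable def degLower (cs : CoxeterSystem M W) (w v : W) : ℕ :=
  if bruhatLE cs v w then
    Set.ncard {y : W | bruhatLE cs y w ∧ (bruhatEdge cs v y ∨ bruhatEdge cs y v)}
  else 0

/-!
Right multiplication by `s = s_i`, a right descent of `w`, maps `[e, w]` onto itself (the lifting
property: `u ≤ w → u s ≤ w`), and it preserves adjacency in the Bruhat graph, because `y` and `v` are
adjacent exactly when `y v⁻¹` is a reflection. So it is an automorphism of the Bruhat graph of
`[e, w]` and preserves degrees.

The lifting property is proved along Bruhat chains; its one nontrivial case is the "diamond"
`s u = t u`, which follows from the strong exchange condition. Strong exchange in turn comes from the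
sign representation of `W` on `W × ZMod 2` (Björner–Brenti), whose second coordinate counts, modulo 2,
the occurrences of a reflection in the left inversion sequence of a word.
-/

namespace CoxeterSystem

variable (cs : CoxeterSystem M W)

local prefix:100 "s" => cs.simple
local prefix:100 "π" => cs.wordProd
local prefix:100 "ℓ" => cs.length
local prefix:100 "lis" => cs.leftInvSeq

lemma simple_mul_mul_simple_eq_simple_iff (i : B) (x : W) : s i * x * s i = s i ↔ x = s i := by
  constructor
  · intro h
    simpa [mul_assoc] using congrArg (fun y => s i * y * s i) h
  · rintro rfl
    simp

lemma prod_map_alternatingWord_two_mul {G : Type*} [Monoid G] (f : B → G) (i i' : B) (m : ℕ) :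
    ((alternatingWord i i' (2 * m)).map f).prod = (f i * f i') ^ m := by
  induction m with
  | zero => simp [alternatingWord]
  | succ m ih =>
    have hodd : ¬ Even (2 * m + 1) := Nat.not_even_two_mul_add_one m
    rw [show 2 * (m + 1) = 2 * m + 1 + 1 by ring, alternatingWord_succ', alternatingWord_succ',
      if_neg hodd, if_pos (even_two_mul m), List.map_cons, List.map_cons, List.prod_cons,
      List.prod_cons, ih, pow_succ', mul_assoc]

lemma wordProd_alternatingWord_two_mul (i i' : B) : π (alternatingWord i i' (2 * M i i')) = 1 := by
  rw [wordProd, prod_map_alternatingWord_two_mul, simple_mul_simple_pow]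

lemma wordProd_alternatingWord_two_mul_add_one_periodic (i i' : B) (k : ℕ) :
    π (alternatingWord i' i (2 * (k + M i i') + 1)) = π (alternatingWord i' i (2 * k + 1)) := by
  have hdiv (n : ℕ) : (2 * n + 1) / 2 = n := by omega
  simp only [prod_alternatingWord_eq_mul_pow, Nat.not_even_two_mul_add_one, if_false, hdiv,
    pow_add, simple_mul_simple_pow', mul_one]

lemma leftInvSeq_alternatingWord_two_mul (i i' : B) :
    lis (alternatingWord i i' (2 * M i i')) =
      (lis (alternatingWord i i' (2 * M i i'))).take (M i i') ++
        (lis (alternatingWord i i' (2 * M i i'))).take (M i i') := by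
  set l := lis (alternatingWord i i' (2 * M i i'))
  have hlen : l.length = 2 * M i i' := by simp [l]
  nth_rw 1 [← List.take_append_drop (M i i') l]
  congr 1
  refine List.ext_getElem (by simp [hlen]; omega) fun k hk _ => ?_
  have hk : k < M i i' := by simp [hlen] at hk; omega
  rw [List.getElem_drop, List.getElem_take, getElem_leftInvSeq_alternatingWord _ _ _ _ _ (by omega),
    getElem_leftInvSeq_alternatingWord _ _ _ _ _ (by omega), add_comm (M i i') k,
    wordProd_alternatingWord_two_mul_add_one_periodic]

lemma even_count_leftInvSeq_alternatingWord [DecidableEq W] (i i' : B) (t : W) :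
    Even ((lis (alternatingWord i i' (2 * M i i'))).count t) := by
  rw [leftInvSeq_alternatingWord_two_mul, List.count_append]
  exact ⟨_, rfl⟩

section SignRepresentation

variable [DecidableEq W]

lemma count_leftInvSeq_cons (j : B) (ω : List B) (y : W) :
    (lis (j :: ω)).count (s j * y * s j) = (lis ω).count y + if y = s j then 1 else 0 := by
  have hconj : s j * y * s j = MulAut.conj (s j) y := by simp
  rw [leftInvSeq, List.count_cons, hconj,
    List.count_map_of_injective _ _ (MulAut.conj (s j)).injective, ← hconj]
  congr 1
  exact if_congr (by rw [beq_iff_eq, eq_comm, simple_mul_mul_simple_eq_simple_iff]) rfl rfl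

/-- The generator `s i` of the sign representation. It is defined on all of `W` rather than on
reflections only; reflections form an invariant subset, so nothing is lost. -/
def simpleSignPerm (i : B) : Equiv.Perm (W × ZMod 2) :=
  Function.Involutive.toPerm (fun p => (s i * p.1 * s i, p.2 + if p.1 = s i then 1 else 0)) <| by
    rintro ⟨x, z⟩
    refine Prod.ext (by simp [mul_assoc]) ?_
    simp only [simple_mul_mul_simple_eq_simple_iff, add_assoc, CharTwo.add_self_eq_zero, add_zero]

lemma simpleSignPerm_apply (i : B) (x : W) (z : ZMod 2) :
    cs.simpleSignPerm i (x, z) = (s i * x * s i, z + if x = s i then 1 else 0) :=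
  rfl

lemma prod_map_simpleSignPerm_apply (ω : List B) (x : W) (z : ZMod 2) :
    (ω.map cs.simpleSignPerm).prod (x, z) =
      (π ω * x * (π ω)⁻¹, z + (lis ω).count (π ω * x * (π ω)⁻¹)) := by
  induction ω generalizing z with
  | nil => simp
  | cons j ω ih =>
    have hconj : π (j :: ω) * x * (π (j :: ω))⁻¹ = s j * (π ω * x * (π ω)⁻¹) * s j := by
      simp [wordProd_cons, mul_assoc]
    rw [List.map_cons, List.prod_cons, Equiv.Perm.mul_apply, ih, hconj, count_leftInvSeq_cons,
      simpleSignPerm_apply]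
    push_cast
    rw [add_assoc]

lemma isLiftable_simpleSignPerm : M.IsLiftable cs.simpleSignPerm := by
  intro i i'
  rw [← prod_map_alternatingWord_two_mul]
  ext ⟨x, z⟩ : 1
  rw [prod_map_simpleSignPerm_apply, wordProd_alternatingWord_two_mul,
    (ZMod.natCast_eq_zero_iff_even).2 (even_count_leftInvSeq_alternatingWord cs i i' _)]
  simp

def signRep : W →* Equiv.Perm (W × ZMod 2) :=
  cs.lift ⟨cs.simpleSignPerm, cs.isLiftable_simpleSignPerm⟩

lemma signRep_wordProd_apply (ω : List B) (x : W) (z : ZMod 2) :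
    cs.signRep (π ω) (x, z) =
      (π ω * x * (π ω)⁻¹, z + (lis ω).count (π ω * x * (π ω)⁻¹)) := by
  have hsimple : cs.signRep ∘ cs.simple = cs.simpleSignPerm :=
    funext (cs.lift_apply_simple cs.isLiftable_simpleSignPerm)
  have hword : cs.signRep (π ω) = (ω.map cs.simpleSignPerm).prod := by
    rw [wordProd, map_list_prod, List.map_map, hsimple]
  rw [hword, prod_map_simpleSignPerm_apply]

def inversionParity (w x : W) : ZMod 2 :=
  (cs.signRep w (x, 0)).2

lemma signRep_apply (w x : W) (z : ZMod 2) :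
    cs.signRep w (x, z) = (w * x * w⁻¹, z + cs.inversionParity w x) := by
  obtain ⟨ω, rfl⟩ := cs.wordProd_surjective w
  simp [inversionParity, signRep_wordProd_apply]

lemma inversionParity_wordProd (ω : List B) (t : W) :
    cs.inversionParity (π ω) ((π ω)⁻¹ * t * π ω) = (lis ω).count t := by
  simp [inversionParity, signRep_wordProd_apply, mul_assoc]

lemma inversionParity_one (x : W) : cs.inversionParity 1 x = 0 := by
  simp [inversionParity]

lemma inversionParity_mul (w w' x : W) :
    cs.inversionParity (w * w') x =
      cs.inversionParity w' x + cs.inversionParity w (w' * x * w'⁻¹) := by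
  have h : cs.signRep (w * w') (x, 0) = cs.signRep w (cs.signRep w' (x, 0)) := by
    rw [map_mul, Equiv.Perm.mul_apply]
  rw [signRep_apply, signRep_apply, signRep_apply] at h
  simpa only [zero_add] using congrArg Prod.snd h

lemma inversionParity_simple_self (i : B) : cs.inversionParity (s i) (s i) = 1 := by
  have h := cs.inversionParity_wordProd [i] (s i)
  rwa [wordProd_singleton, leftInvSeq_singleton, inv_simple, simple_mul_simple_self, one_mul,
    List.count_singleton_self, Nat.cast_one] at h

lemma inversionParity_self_of_isReflection {t : W} (ht : cs.IsReflection t) :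
    cs.inversionParity t t = 1 := by
  obtain ⟨u, i, rfl⟩ := ht
  have hconj : u⁻¹ * (u * s i * u⁻¹) * u⁻¹⁻¹ = s i := by group
  have hinv : cs.inversionParity u⁻¹ (u * s i * u⁻¹) + cs.inversionParity u (s i) = 0 := by
    have h := cs.inversionParity_mul u u⁻¹ (u * s i * u⁻¹)
    rwa [mul_inv_cancel, inversionParity_one, hconj, eq_comm] at h
  rw [inversionParity_mul, hconj, inversionParity_mul, inversionParity_simple_self,
    show s i * s i * (s i)⁻¹ = s i by group]
  linear_combination hinv

end SignRepresentation

theorem mem_leftInvSeq_of_isLeftInversion {ω : List B} {t : W}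
    (ht : cs.IsLeftInversion (π ω) t) : t ∈ lis ω := by
  classical
  -- Otherwise the parity cocycle puts `t` into the left inversion sequence of a reduced word for
  -- `t * π ω`, making `t` a left inversion of `t * π ω` as well.
  by_contra hmem
  obtain ⟨ψ, hψ, hψω⟩ := cs.exists_isReduced (t * π ω)
  have hparity : cs.inversionParity (π ψ) ((π ψ)⁻¹ * t * π ψ) = 1 := by
    have hconj : (π ψ)⁻¹ * t * π ψ = (π ω)⁻¹ * t * π ω := by
      rw [← hψω, mul_inv_rev, ht.1.inv, mul_assoc _ t t, ht.1.mul_self, mul_one, mul_assoc]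
    rw [hconj, ← hψω, inversionParity_mul, inversionParity_wordProd, List.count_eq_zero.2 hmem,
      show π ω * ((π ω)⁻¹ * t * π ω) * (π ω)⁻¹ = t by group,
      inversionParity_self_of_isReflection cs ht.1]
    simp
  have hmem' : t ∈ lis ψ := by
    rw [inversionParity_wordProd] at hparity
    exact List.count_pos_iff.1 (Nat.pos_of_ne_zero fun h => by simp [h] at hparity)
  have hlt := (cs.isLeftInversion_of_mem_leftInvSeq hψ hmem').2
  rw [← hψω, ← mul_assoc, ht.1.mul_self, one_mul] at hlt
  exact lt_asymm hlt ht.2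

theorem exists_eraseIdx_of_isLeftInversion {ω : List B} {t : W}
    (ht : cs.IsLeftInversion (π ω) t) : ∃ j < ω.length, t * π ω = π (ω.eraseIdx j) := by
  obtain ⟨j, hj, rfl⟩ := List.getElem_of_mem (cs.mem_leftInvSeq_of_isLeftInversion ht)
  refine ⟨j, by simpa using hj, ?_⟩
  rw [← List.getD_eq_getElem _ 1 hj, getD_leftInvSeq_mul_wordProd]

theorem simple_mul_eq_mul_of_length_lt {u t : W} {i : B} (ht : cs.IsReflection t)
    (hu : ℓ u < ℓ (t * u)) (hlt : ℓ (s i * (t * u)) < ℓ (s i * u)) : s i * u = t * u := by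
  obtain ⟨ρ, hρ, hρeq⟩ := cs.exists_isReduced (s i * (t * u))
  have hword : π (i :: ρ) = t * u := by
    rw [wordProd_cons, ← hρeq, simple_mul_simple_cancel_left]
  have hinv : cs.IsLeftInversion (π (i :: ρ)) t :=
    ⟨ht, by rwa [hword, ← mul_assoc, ht.mul_self, one_mul]⟩
  obtain ⟨j, hj, hdel⟩ := cs.exists_eraseIdx_of_isLeftInversion hinv
  rw [hword, ← mul_assoc, ht.mul_self, one_mul] at hdel
  rcases j with _ | k
  · rw [List.eraseIdx_cons_zero, ← hρeq] at hdel
    calc s i * u = s i * (s i * (t * u)) := by rw [← hdel]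
      _ = t * u := simple_mul_simple_cancel_left cs i
  · rw [List.eraseIdx_cons_succ, wordProd_cons] at hdel
    have hk : k < ρ.length := by simpa using hj
    have hshort : ℓ (s i * u) < ℓ (s i * (t * u)) :=
      calc ℓ (s i * u) = ℓ (π (ρ.eraseIdx k)) := by rw [hdel, simple_mul_simple_cancel_left]
        _ ≤ (ρ.eraseIdx k).length := cs.length_wordProd_le _
        _ < ρ.length := by rw [List.length_eraseIdx_of_lt hk]; omega
        _ = ℓ (s i * (t * u)) := by rw [hρeq, hρ]
    exact absurd hlt (lt_asymm hshort)

end CoxeterSystem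

section BruhatGraph

variable {cs : CoxeterSystem M W}

lemma bruhatEdge_or_bruhatEdge_iff {v y : W} :
    (bruhatEdge cs v y ∨ bruhatEdge cs y v) ↔ cs.IsReflection (y * v⁻¹) := by
  constructor
  · rintro (⟨t, ht, rfl, -⟩ | ⟨t, ht, rfl, -⟩)
    · simpa using ht
    · simpa [ht.inv] using ht.isReflection_inv
  · intro ht
    have hy : y = y * v⁻¹ * v := by group
    rcases (ht.length_mul_right_ne v).lt_or_gt with h | h
    · exact Or.inr ⟨v * y⁻¹, by simpa using ht.isReflection_inv, by group, by rwa [← hy] at h⟩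
    · exact Or.inl ⟨y * v⁻¹, ht, hy, by rwa [← hy] at h⟩

lemma bruhatLE_simple_mul_of_length_lt {u w : W} {i : B} (hw : cs.IsLeftDescent w i)
    (h : bruhatLE cs u w) (hu : cs.length u < cs.length (cs.simple i * u)) :
    bruhatLE cs (cs.simple i * u) w := by
  induction h using Relation.ReflTransGen.head_induction_on with
  | refl => exact absurd hw (lt_asymm hu)
  | @head a b hedge hle ih =>
    obtain ⟨t, ht, rfl, hlen⟩ := hedge
    have hne : cs.length (cs.simple i * (t * a)) ≠ cs.length (cs.simple i * a) := by
      simpa [mul_assoc] using (ht.conj (cs.simple i)).length_mul_right_ne (cs.simple i * a)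
    rcases hne.lt_or_gt with hlt | hlt
    · exact cs.simple_mul_eq_mul_of_length_lt ht hlen hlt ▸ hle
    · have hedge' : bruhatEdge cs (cs.simple i * a) (cs.simple i * (t * a)) :=
        ⟨cs.simple i * t * (cs.simple i)⁻¹, ht.conj _, by group, hlt⟩
      rcases (cs.length_simple_mul_ne (t * a) i).lt_or_gt with hdown | hup
      · exact .head hedge' (.head ⟨cs.simple i, cs.isReflection_simple i, by simp, hdown⟩ hle)
      · exact .head hedge' (ih hup)

lemma bruhatLE_simple_mul {u w : W} {i : B} (hw : cs.IsLeftDescent w i) (h : bruhatLE cs u w) :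
    bruhatLE cs (cs.simple i * u) w := by
  rcases (cs.length_simple_mul_ne u i).lt_or_gt with hdown | hup
  · exact .head ⟨cs.simple i, cs.isReflection_simple i, by simp, hdown⟩ h
  · exact bruhatLE_simple_mul_of_length_lt hw h hup

lemma bruhatEdge.inv {u v : W} (h : bruhatEdge cs u v) : bruhatEdge cs u⁻¹ v⁻¹ := by
  obtain ⟨t, ht, rfl, hlen⟩ := h
  refine ⟨u⁻¹ * t * u, by simpa using ht.conj u⁻¹, ?_, ?_⟩
  · rw [mul_inv_rev, ht.inv]
    group
  · rwa [length_inv, length_inv]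

lemma bruhatLE.inv {u w : W} (h : bruhatLE cs u w) : bruhatLE cs u⁻¹ w⁻¹ :=
  h.lift _ fun _ _ => bruhatEdge.inv

lemma bruhatLE_mul_simple {u w : W} {i : B} (hw : cs.IsRightDescent w i) (h : bruhatLE cs u w) :
    bruhatLE cs (u * cs.simple i) w := by
  simpa using (bruhatLE_simple_mul (cs.isLeftDescent_inv_iff.2 hw) h.inv).inv

lemma bruhatLE_mul_simple_iff {u w : W} {i : B} (hw : cs.IsRightDescent w i) :
    bruhatLE cs (u * cs.simple i) w ↔ bruhatLE cs u w :=
  ⟨fun h => by simpa using bruhatLE_mul_simple hw h, bruhatLE_mul_simple hw⟩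

end BruhatGraph

theorem degLower_right_descent_invariant_general
    (cs : CoxeterSystem M W) (w : W) (i : B) (hi : cs.IsRightDescent w i) :
    ∀ v : W, degLower cs w v = degLower cs w (v * cs.simple i) := by
  intro v
  have hneighbors : {y | bruhatLE cs y w ∧ (bruhatEdge cs v y ∨ bruhatEdge cs y v)} =
      (· * cs.simple i) ⁻¹' {y | bruhatLE cs y w ∧
        (bruhatEdge cs (v * cs.simple i) y ∨ bruhatEdge cs y (v * cs.simple i))} := by
    ext y
    simp only [Set.mem_ofPred_eq, Set.mem_preimage, bruhatEdge_or_bruhatEdge_iff,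
      bruhatLE_mul_simple_iff hi, mul_inv_rev, inv_simple, mul_assoc,
      simple_mul_simple_cancel_left]
  unfold degLower
  rw [bruhatLE_mul_simple_iff hi, hneighbors,
    Set.ncard_preimage_of_injective_subset_range (mul_left_injective _)
      fun y _ => ⟨y * cs.simple i, simple_mul_simple_cancel_right cs i⟩]

/-- Invariance of degree on lower Bruhat intervals under right descents. -/
theorem degLower_right_descent_invariant [Finite W]
    (cs : CoxeterSystem M W) (w : W) (i : B) (hi : cs.IsRightDescent w i) :
    ∀ v : W, degLower cs w v = degLower cs w (v * cs.simple i) :=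
  degLower_right_descent_invariant_general cs w i hi
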